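/- In the path coalgebra kQ^c of a quiver Q, for any two vertices s, t the space of (e_s, e_t)-primitive elements equals k(e_s − e_t) ⊕ k(Q_1)_{s,t}, the span of e_s − e_t together with the arrows from s to t. In particular, for s = t the primitive space equals the span of the loops at s. -/

import Mathlib

/-!
Write `c_p` for the coefficient of the path `p` in an `(e_s, e_t)`-primitive `α`. Since
`Δ p = ∑_{qr = p} q ⊗ r` with pairwise distinct summands, the coefficient of `q ⊗ r` in `Δ α` is
`c_{qr}` if `q` and `r` are composable and `0` otherwise. Comparing with `e_s ⊗ α + α ⊗ e_t`
kills the coefficients of the paths of length at least two, of the arrows not from `s` to `t` and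
of the vertices other than `s` and `t`; it also gives `c_{e_s} + c_{e_t} = 0` if `s ≠ t`, and
`c_{e_s} = 0` if `s = t`.
-/

open Quiver TensorProduct

universe uv uq
variable {V : Type uv} [Quiver.{uq+1} V]

/-- All splittings of a path `p : a ⟶ b` into a pair of composable paths. -/
def pathDecomps : ∀ {a b : V}, Path a b → List ((c : V) × Path a c × Path c b)
  | a, _, .nil => [⟨a, .nil, .nil⟩]
  | _, b, .cons p e =>
      ⟨b, (p.cons e), .nil⟩ :: (pathDecomps p).map (fun x => ⟨x.1, x.2.1, x.2.2.cons e⟩)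

/-- A realization of the path coalgebra of a quiver `V` over `k` on a coalgebra `C`. -/
structure PathCoalgebraOn (k : Type*) (V : Type uv) [CommRing k] [Quiver.{uq+1} V]
    (C : Type*) [AddCommGroup C] [Module k C] [Coalgebra k C] where
  pathElem : ∀ {a b : V}, Path a b → C
  linearIndependent :
    LinearIndependent k (fun p : (Σ a b : V, Path a b) => pathElem p.2.2)
  span_top :
    Submodule.span k (Set.range (fun p : (Σ a b : V, Path a b) => pathElem p.2.2)) = ⊤
  comul_path : ∀ {a b : V} (p : Path a b),
    Coalgebra.comul (R := k) (pathElem p) =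
      ((pathDecomps p).map (fun x => pathElem x.2.1 ⊗ₜ[k] pathElem x.2.2)).sum
  counit_nil : ∀ a : V, Coalgebra.counit (R := k) (pathElem (.nil : Path a a)) = 1
  counit_pos : ∀ {a b : V} (p : Path a b), p.length ≠ 0 →
    Coalgebra.counit (R := k) (pathElem p) = 0

theorem comp_eq_of_mem_pathDecomps : ∀ {a b : V} {p : Path a b} {x}, x ∈ pathDecomps p →
    x.2.1.comp x.2.2 = p
  | _, _, .nil, _, hx => by
    rw [pathDecomps, List.mem_singleton] at hx
    rw [hx]; rfl
  | _, _, .cons p e, x, hx => by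
    simp only [pathDecomps, List.mem_cons, List.mem_map] at hx
    rcases hx with rfl | ⟨y, hy, rfl⟩
    · rfl
    · exact congrArg (·.cons e) (comp_eq_of_mem_pathDecomps hy)

theorem mk_mem_pathDecomps_comp : ∀ {a c b : V} (q : Path a c) (r : Path c b),
    ⟨c, q, r⟩ ∈ pathDecomps (q.comp r)
  | _, _, _, .nil, .nil => by simp [pathDecomps]
  | _, _, _, .cons _ _, .nil => by simp [pathDecomps]
  | _, _, _, q, .cons r e => by
    rw [Path.comp_cons, pathDecomps]
    exact List.mem_cons_of_mem _ (List.mem_map_of_mem (mk_mem_pathDecomps_comp q r))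

theorem mk_mem_pathDecomps_iff {a c b : V} {p : Path a b} {q : Path a c} {r : Path c b} :
    ⟨c, q, r⟩ ∈ pathDecomps p ↔ q.comp r = p :=
  ⟨comp_eq_of_mem_pathDecomps, by rintro rfl; exact mk_mem_pathDecomps_comp q r⟩

theorem nodup_pathDecomps : ∀ {a b : V} (p : Path a b), (pathDecomps p).Nodup
  | _, _, .nil => by rw [pathDecomps]; exact List.nodup_singleton _
  | _, _, .cons p e => by
    rw [pathDecomps]
    refine List.nodup_cons.2 ⟨fun h => ?_, (nodup_pathDecomps p).map ?_⟩
    · obtain ⟨y, -, hy⟩ := List.mem_map.1 h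
      simpa using congrArg (fun x : Σ c, Quiver.Path _ c × Quiver.Path c _ => x.2.2.length) hy
    · rintro ⟨c, q, r⟩ ⟨c', q', r'⟩ h
      simp only [Sigma.mk.inj_iff] at h
      obtain ⟨rfl, h⟩ := h
      simp only [heq_iff_eq, Prod.mk.injEq] at h
      obtain ⟨rfl, h⟩ := h
      rw [eq_of_heq (Path.heq_of_cons_eq_cons h)]

theorem decomp_indices_eq_iff {a c b : V} (x : Σ c, Path a c × Path c b)
    (q : Path a c) (r : Path c b) :
    ((⟨a, x.1, x.2.1⟩, ⟨x.1, b, x.2.2⟩) :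
        (Σ a b : V, Path a b) × (Σ a b : V, Path a b)) = (⟨a, c, q⟩, ⟨c, b, r⟩) ↔
      x = ⟨c, q, r⟩ := by
  obtain ⟨c', q', r'⟩ := x
  constructor
  · intro h
    simp only [Prod.mk.injEq, Sigma.mk.inj_iff, heq_eq_eq, true_and] at h
    obtain ⟨⟨rfl, hq⟩, -, hr⟩ := h
    simp only [heq_iff_eq, Sigma.mk.inj_iff, true_and] at hq hr
    rw [hq, hr]
  · rintro ⟨⟩
    rfl

namespace Coalgebra

variable {R : Type*} {C : Type*} [CommSemiring R] [AddCommMonoid C] [Module R C] [Coalgebra R C]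

variable (R) in
/-- The `(g, h)`-primitive elements. -/
def skewPrimitives (g h : C) : Submodule R C :=
  LinearMap.eqLocus (comul (R := R)) (TensorProduct.mk R C C g + (TensorProduct.mk R C C).flip h)

theorem mem_skewPrimitives {g h x : C} :
    x ∈ skewPrimitives R g h ↔ comul (R := R) x = g ⊗ₜ[R] x + x ⊗ₜ[R] h :=
  Iff.rfl

end Coalgebra

open Coalgebra

namespace PathCoalgebraOn

variable {k : Type*} [CommRing k] {C : Type*} [AddCommGroup C] [Module k C] [Coalgebra k C]
  (P : PathCoalgebraOn k V C)

noncomputable def basis : Module.Basis (Σ a b : V, Path a b) k C :=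
  .mk P.linearIndependent P.span_top.ge

@[simp]
theorem basis_apply (i : Σ a b : V, Path a b) : P.basis i = P.pathElem i.2.2 :=
  Module.Basis.mk_apply _ _ _

theorem basis_repr_pathElem {a b : V} (p : Path a b) :
    P.basis.repr (P.pathElem p) = Finsupp.single ⟨a, b, p⟩ 1 := by
  simpa using P.basis.repr_self ⟨a, b, p⟩

theorem comul_nil (a : V) :
    comul (R := k) (P.pathElem (.nil : Path a a)) =
      P.pathElem (.nil : Path a a) ⊗ₜ[k] P.pathElem (.nil : Path a a) := by
  simp [P.comul_path, pathDecomps]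

theorem comul_toPath {a b : V} (f : a ⟶ b) :
    comul (R := k) (P.pathElem f.toPath) =
      P.pathElem f.toPath ⊗ₜ[k] P.pathElem (.nil : Path b b) +
        P.pathElem (.nil : Path a a) ⊗ₜ[k] P.pathElem f.toPath := by
  simp [P.comul_path, pathDecomps, Hom.toPath]

theorem span_le_skewPrimitives (s t : V) :
    Submodule.span k (insert (P.pathElem (.nil : Path s s) - P.pathElem (.nil : Path t t))
        (Set.range fun f : s ⟶ t => P.pathElem f.toPath)) ≤
      skewPrimitives k (P.pathElem (.nil : Path s s)) (P.pathElem (.nil : Path t t)) := by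
  rw [Submodule.span_le]
  rintro x (rfl | ⟨f, rfl⟩) <;> rw [SetLike.mem_coe, mem_skewPrimitives]
  · rw [map_sub, comul_nil, comul_nil, tmul_sub, sub_tmul]
    abel
  · rw [comul_toPath, add_comm]

theorem tensorProduct_repr_comul_pathElem {a b : V} (p : Path a b) :
    (P.basis.tensorProduct P.basis).repr (comul (R := k) (P.pathElem p)) =
      ((pathDecomps p).map fun x =>
        Finsupp.single (⟨a, x.1, x.2.1⟩, ⟨x.1, b, x.2.2⟩) 1).sum := by
  rw [P.comul_path, map_list_sum, List.map_map]
  congr 1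
  refine List.map_congr_left fun x _ => ?_
  simpa using (P.basis.tensorProduct P.basis).repr_self (⟨a, x.1, x.2.1⟩, ⟨x.1, b, x.2.2⟩)

theorem tensorProduct_repr_comul_apply (x : C) {a c b : V} (q : Path a c) (r : Path c b) :
    (P.basis.tensorProduct P.basis).repr (comul (R := k) x) (⟨a, c, q⟩, ⟨c, b, r⟩) =
      P.basis.repr x ⟨a, b, q.comp r⟩ := by
  suffices Finsupp.lapply (⟨a, c, q⟩, ⟨c, b, r⟩) ∘ₗ
      (P.basis.tensorProduct P.basis).repr.toLinearMap ∘ₗ comul =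
        P.basis.coord ⟨a, b, q.comp r⟩
    from LinearMap.congr_fun this x
  refine P.basis.ext fun ⟨a', b', p⟩ => ?_
  classical
  simp only [LinearMap.comp_apply, basis_apply, LinearEquiv.coe_coe, Module.Basis.coord_apply,
    tensorProduct_repr_comul_pathElem, Finsupp.lapply_apply, basis_repr_pathElem]
  rw [← List.sum_toFinset _ (nodup_pathDecomps p), Finsupp.finsetSum_apply]
  simp only [Finsupp.single_apply]
  by_cases h : a' = a ∧ b' = b
  · obtain ⟨rfl, rfl⟩ := h
    simp_rw [decomp_indices_eq_iff, Finset.sum_ite_eq', List.mem_toFinset, mk_mem_pathDecomps_iff]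
    simp [eq_comm]
  · rw [if_neg fun he => h ⟨congrArg (·.1) he, congrArg (·.2.1) he⟩]
    exact Finset.sum_eq_zero fun y _ =>
      if_neg fun he => h ⟨congrArg (·.1.1) he, congrArg (·.2.2.1) he⟩

theorem tensorProduct_repr_comul_apply_of_ne (x : C) {j l : Σ a b : V, Path a b}
    (h : j.2.1 ≠ l.1) : (P.basis.tensorProduct P.basis).repr (comul (R := k) x) (j, l) = 0 := by
  suffices Finsupp.lapply (j, l) ∘ₗ
      (P.basis.tensorProduct P.basis).repr.toLinearMap ∘ₗ comul = 0
    from LinearMap.congr_fun this x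
  refine P.basis.ext fun ⟨a, b, p⟩ => ?_
  simp only [LinearMap.comp_apply, basis_apply, LinearEquiv.coe_coe,
    tensorProduct_repr_comul_pathElem, Finsupp.lapply_apply, LinearMap.zero_apply]
  classical
  rw [← List.sum_toFinset _ (nodup_pathDecomps p), Finsupp.finsetSum_apply]
  exact Finset.sum_eq_zero fun y _ =>
    Finsupp.single_eq_of_ne fun he => h (by obtain ⟨rfl, rfl⟩ := Prod.ext_iff.1 he; rfl)

theorem basis_repr_comp_of_mem_skewPrimitives {g h x : C} (hx : x ∈ skewPrimitives k g h)
    {a c b : V} (q : Path a c) (r : Path c b) :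
    P.basis.repr x ⟨a, b, q.comp r⟩ =
      P.basis.repr g ⟨a, c, q⟩ * P.basis.repr x ⟨c, b, r⟩ +
        P.basis.repr x ⟨a, c, q⟩ * P.basis.repr h ⟨c, b, r⟩ := by
  rw [← tensorProduct_repr_comul_apply, mem_skewPrimitives.1 hx, map_add, Finsupp.add_apply,
    Module.Basis.tensorProduct_repr_tmul_apply, Module.Basis.tensorProduct_repr_tmul_apply,
    smul_eq_mul, smul_eq_mul, mul_comm, mul_comm (P.basis.repr h _)]

theorem basis_repr_of_mem_skewPrimitives_of_ne {g h x : C} (hx : x ∈ skewPrimitives k g h)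
    {j l : Σ a b : V, Path a b} (hjl : j.2.1 ≠ l.1) :
    P.basis.repr g j * P.basis.repr x l + P.basis.repr x j * P.basis.repr h l = 0 := by
  rw [← P.tensorProduct_repr_comul_apply_of_ne x hjl, mem_skewPrimitives.1 hx, map_add,
    Finsupp.add_apply, Module.Basis.tensorProduct_repr_tmul_apply,
    Module.Basis.tensorProduct_repr_tmul_apply, smul_eq_mul, smul_eq_mul, mul_comm,
    mul_comm (P.basis.repr h _)]

theorem basis_repr_pathElem_apply_of_length_ne {a b a' b' : V} {p : Path a b} {q : Path a' b'}
    (h : p.length ≠ q.length) : P.basis.repr (P.pathElem p) ⟨a', b', q⟩ = 0 := by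
  rw [basis_repr_pathElem]
  exact Finsupp.single_eq_of_ne fun he => h (congrArg (·.2.2.length) he).symm

theorem basis_repr_nil_apply_self (a : V) :
    P.basis.repr (P.pathElem (.nil : Path a a)) ⟨a, a, .nil⟩ = 1 := by
  rw [basis_repr_pathElem, Finsupp.single_eq_same]

theorem basis_repr_nil_apply_nil_of_ne {u a : V} (h : u ≠ a) :
    P.basis.repr (P.pathElem (.nil : Path u u)) ⟨a, a, .nil⟩ = 0 := by
  rw [basis_repr_pathElem]
  exact Finsupp.single_eq_of_ne fun he => h (congrArg (·.1) he).symm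

section SkewPrimitive

variable {P} {s t : V} {α : C}

theorem basis_repr_cons_eq_zero
    (hα : α ∈ skewPrimitives k (P.pathElem (.nil : Path s s)) (P.pathElem (.nil : Path t t)))
    {a b c : V} (p : Path a b) (e : b ⟶ c) (hp : p.length ≠ 0) :
    P.basis.repr α ⟨a, c, p.cons e⟩ = 0 := by
  have h := P.basis_repr_comp_of_mem_skewPrimitives hα p e.toPath
  rwa [basis_repr_pathElem_apply_of_length_ne _ (by simpa using hp.symm),
    basis_repr_pathElem_apply_of_length_ne _ (by simp), zero_mul, mul_zero, add_zero] at h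

theorem basis_repr_toPath_eq_zero
    (hα : α ∈ skewPrimitives k (P.pathElem (.nil : Path s s)) (P.pathElem (.nil : Path t t)))
    {a b : V} (f : a ⟶ b) (h : a ≠ s ∨ b ≠ t) :
    P.basis.repr α ⟨a, b, f.toPath⟩ = 0 := by
  rcases h with ha | hb
  · have h := P.basis_repr_comp_of_mem_skewPrimitives hα (.nil : Path a a) f.toPath
    rwa [Path.nil_comp, basis_repr_nil_apply_nil_of_ne _ (Ne.symm ha),
      basis_repr_pathElem_apply_of_length_ne _ (by simp), zero_mul, mul_zero, add_zero] at h
  · have h := P.basis_repr_comp_of_mem_skewPrimitives hα f.toPath (.nil : Path b b)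
    rwa [Path.comp_nil, basis_repr_nil_apply_nil_of_ne _ (Ne.symm hb),
      basis_repr_pathElem_apply_of_length_ne _ (by simp), zero_mul, mul_zero, add_zero] at h

theorem basis_repr_nil_eq_zero_of_ne
    (hα : α ∈ skewPrimitives k (P.pathElem (.nil : Path s s)) (P.pathElem (.nil : Path t t)))
    {a : V} (hs : a ≠ s) (ht : a ≠ t) : P.basis.repr α ⟨a, a, .nil⟩ = 0 := by
  have h := P.basis_repr_comp_of_mem_skewPrimitives hα (.nil : Path a a) (.nil : Path a a)
  rwa [basis_repr_nil_apply_nil_of_ne _ hs.symm, basis_repr_nil_apply_nil_of_ne _ ht.symm,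
    zero_mul, mul_zero, add_zero] at h

theorem basis_repr_nil_self_eq_zero
    (hα : α ∈ skewPrimitives k (P.pathElem (.nil : Path s s)) (P.pathElem (.nil : Path s s))) :
    P.basis.repr α ⟨s, s, .nil⟩ = 0 := by
  have h := P.basis_repr_comp_of_mem_skewPrimitives hα (.nil : Path s s) (.nil : Path s s)
  rwa [basis_repr_nil_apply_self, one_mul, mul_one, Path.comp_nil, left_eq_add] at h

theorem basis_repr_nil_add_nil_eq_zero
    (hα : α ∈ skewPrimitives k (P.pathElem (.nil : Path s s)) (P.pathElem (.nil : Path t t)))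
    (hst : s ≠ t) : P.basis.repr α ⟨t, t, .nil⟩ + P.basis.repr α ⟨s, s, .nil⟩ = 0 := by
  have h := P.basis_repr_of_mem_skewPrimitives_of_ne hα
    (j := ⟨s, s, .nil⟩) (l := ⟨t, t, .nil⟩) hst
  rwa [basis_repr_nil_apply_self, basis_repr_nil_apply_self, one_mul, mul_one] at h

theorem basis_repr_nil_eq_zero
    (hα : α ∈ skewPrimitives k (P.pathElem (.nil : Path s s)) (P.pathElem (.nil : Path t t)))
    (hs : P.basis.repr α ⟨s, s, .nil⟩ = 0) (a : V) : P.basis.repr α ⟨a, a, .nil⟩ = 0 := by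
  by_cases has : a = s
  · subst has; exact hs
  by_cases hat : a = t
  · subst hat
    simpa [hs] using basis_repr_nil_add_nil_eq_zero hα (Ne.symm has)
  exact basis_repr_nil_eq_zero_of_ne hα has hat

theorem mem_span_toPath_of_mem_skewPrimitives
    (hα : α ∈ skewPrimitives k (P.pathElem (.nil : Path s s)) (P.pathElem (.nil : Path t t)))
    (hs : P.basis.repr α ⟨s, s, .nil⟩ = 0) :
    α ∈ Submodule.span k (Set.range fun f : s ⟶ t => P.pathElem f.toPath) := by
  refine Submodule.span_mono ?_ (P.basis.mem_span_repr_support α)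
  rintro _ ⟨⟨a, b, p⟩, hi, rfl⟩
  rw [Finset.mem_coe, Finsupp.mem_support_iff] at hi
  rcases p with _ | ⟨_ | ⟨p, e'⟩, e⟩
  · exact absurd (basis_repr_nil_eq_zero hα hs a) hi
  · by_cases hab : a = s ∧ b = t
    · obtain ⟨rfl, rfl⟩ := hab
      exact ⟨e, by simp [Hom.toPath]⟩
    · exact absurd (basis_repr_toPath_eq_zero hα e (not_and_or.1 hab)) hi
  · exact absurd (basis_repr_cons_eq_zero hα _ e (by simp)) hi

theorem mem_span_of_mem_skewPrimitives
    (hα : α ∈ skewPrimitives k (P.pathElem (.nil : Path s s)) (P.pathElem (.nil : Path t t))) :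
    α ∈ Submodule.span k (insert (P.pathElem (.nil : Path s s) - P.pathElem (.nil : Path t t))
      (Set.range fun f : s ⟶ t => P.pathElem f.toPath)) := by
  rcases eq_or_ne s t with rfl | hst
  · rw [sub_self, Submodule.span_insert_zero]
    exact mem_span_toPath_of_mem_skewPrimitives hα (basis_repr_nil_self_eq_zero hα)
  set d := P.basis.repr α ⟨s, s, .nil⟩
  have hmem : P.pathElem (.nil : Path s s) - P.pathElem (.nil : Path t t) ∈
      Submodule.span k (insert (P.pathElem (.nil : Path s s) - P.pathElem (.nil : Path t t))
        (Set.range fun f : s ⟶ t => P.pathElem f.toPath)) :=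
    Submodule.subset_span (Set.mem_insert _ _)
  have hβ := sub_mem hα (Submodule.smul_mem _ d (P.span_le_skewPrimitives s t hmem))
  have hβs : P.basis.repr
      (α - d • (P.pathElem (.nil : Path s s) - P.pathElem (.nil : Path t t))) ⟨s, s, .nil⟩ = 0 := by
    simp [d, basis_repr_nil_apply_self, basis_repr_nil_apply_nil_of_ne _ hst.symm]
  rw [← sub_add_cancel α (d • _)]
  exact add_mem (Submodule.span_mono (Set.subset_insert _ _)
    (mem_span_toPath_of_mem_skewPrimitives hβ hβs)) (Submodule.smul_mem _ d hmem)

end SkewPrimitive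

theorem skewPrimitives_eq_span (s t : V) :
    skewPrimitives k (P.pathElem (.nil : Path s s)) (P.pathElem (.nil : Path t t)) =
      Submodule.span k (insert (P.pathElem (.nil : Path s s) - P.pathElem (.nil : Path t t))
        (Set.range fun f : s ⟶ t => P.pathElem f.toPath)) :=
  le_antisymm (fun _ => mem_span_of_mem_skewPrimitives) (P.span_le_skewPrimitives s t)

theorem disjoint_span_nil_sub_nil_span_toPath {s t : V} (hst : s ≠ t) :
    Disjoint (Submodule.span k {P.pathElem (.nil : Path s s) - P.pathElem (.nil : Path t t)})
      (Submodule.span k (Set.range fun f : s ⟶ t => P.pathElem f.toPath)) := by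
  rw [Submodule.disjoint_def]
  rintro _ hx hx'
  obtain ⟨d, rfl⟩ := Submodule.mem_span_singleton.1 hx
  have hle : Submodule.span k (Set.range fun f : s ⟶ t => P.pathElem f.toPath) ≤
      LinearMap.ker (P.basis.coord ⟨s, s, .nil⟩) := by
    rw [Submodule.span_le]
    rintro _ ⟨f, rfl⟩
    exact P.basis_repr_pathElem_apply_of_length_ne (by simp)
  have hd := hle hx'
  simp [basis_repr_nil_apply_self, basis_repr_nil_apply_nil_of_ne _ hst.symm] at hd
  rw [hd, zero_smul]

end PathCoalgebraOn

/-- Taft–Wilson, part 2: in the path coalgebra `kQ^c`, for vertices `s, t`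
the space of `(e_s, e_t)`-primitive elements is `k(e_s - e_t) ⊕ k(Q₁)_{s,t}`;
in particular for `s = t` it is the span of the loops at `s`. -/
theorem primitives_of_pathCoalgebra (k : Type*) [Field k]
    (C : Type*) [AddCommGroup C] [Module k C] [Coalgebra k C]
    (P : PathCoalgebraOn k V C) (s t : V) :
    ({α : C | Coalgebra.comul (R := k) α =
        P.pathElem (.nil : Path s s) ⊗ₜ[k] α + α ⊗ₜ[k] P.pathElem (.nil : Path t t)} =
      ↑(Submodule.span k
        (insert (P.pathElem (.nil : Path s s) - P.pathElem (.nil : Path t t))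
          (Set.range fun f : s ⟶ t => P.pathElem f.toPath)))) ∧
    (s ≠ t →
      Disjoint
        (Submodule.span k {P.pathElem (.nil : Path s s) - P.pathElem (.nil : Path t t)})
        (Submodule.span k (Set.range fun f : s ⟶ t => P.pathElem f.toPath))) ∧
    (∀ α : C, Coalgebra.comul (R := k) α =
        P.pathElem (.nil : Path s s) ⊗ₜ[k] α + α ⊗ₜ[k] P.pathElem (.nil : Path s s) →
      α ∈ Submodule.span k (Set.range fun f : s ⟶ s => P.pathElem f.toPath)) := by
  refine ⟨congrArg SetLike.coe (P.skewPrimitives_eq_span s t),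
    P.disjoint_span_nil_sub_nil_span_toPath, fun α hα => ?_⟩
  have h := P.skewPrimitives_eq_span s s ▸ mem_skewPrimitives.2 hα
  rwa [sub_self, Submodule.span_insert_zero] at h
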